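/- (Observational–interventional gap equals reverse directed information) Let (X^n, Y^n) be jointly distributed random sequences with finite alphabets. Then E[log ( P(Y^n | X^n) / P(Y^n‖X^n) )] = I(Y^{n-1}→X^n), where the expectation is over the joint pmf and I(Y^{n-1}→X^n) := Σ_{i=1}^n I(Y^{i-1}; X_i | X^{i-1}). Equivalently, the conditional KL divergence of the observational conditional law P_{Y^n|X^n} from the causally conditioned (interventional) law P_{Y^n‖X^n}, averaged over P_{X^n}, equals I(Y^{n-1}→X^n). -/

import Mathlib

open Finset

noncomputable section

-- Probability of the event `E` under the pmf `p` on a finite sample space `Ω`.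
open Classical in
def pr {Ω : Type*} [Fintype Ω] (p : Ω → ℝ) (E : Ω → Prop) : ℝ :=
  ∑ ω, if E ω then p ω else 0

-- Shannon entropy `H(U)` (pointwise form).
def entropy {Ω α : Type*} [Fintype Ω] (p : Ω → ℝ) (U : Ω → α) : ℝ :=
  -∑ ω, p ω * Real.log (pr p (fun ω' => U ω' = U ω))

-- Conditional Shannon entropy `H(U | V)`.
def condEntropy {Ω α β : Type*} [Fintype Ω] (p : Ω → ℝ) (U : Ω → α) (V : Ω → β) : ℝ :=
  -∑ ω, p ω * Real.log
      (pr p (fun ω' => U ω' = U ω ∧ V ω' = V ω) / pr p (fun ω' => V ω' = V ω))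

-- Mutual information `I(U ; V)`.
def mutualInfo {Ω α β : Type*} [Fintype Ω] (p : Ω → ℝ) (U : Ω → α) (V : Ω → β) : ℝ :=
  ∑ ω, p ω * Real.log
      (pr p (fun ω' => U ω' = U ω ∧ V ω' = V ω) /
        (pr p (fun ω' => U ω' = U ω) * pr p (fun ω' => V ω' = V ω)))

-- Conditional mutual information `I(U ; V | W)`.
def condMutualInfo {Ω α β γ : Type*} [Fintype Ω] (p : Ω → ℝ)
    (U : Ω → α) (V : Ω → β) (W : Ω → γ) : ℝ :=
  ∑ ω, p ω * Real.log
      ((pr p (fun ω' => U ω' = U ω ∧ V ω' = V ω ∧ W ω' = W ω) *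
          pr p (fun ω' => W ω' = W ω)) /
        (pr p (fun ω' => U ω' = U ω ∧ W ω' = W ω) *
          pr p (fun ω' => V ω' = V ω ∧ W ω' = W ω)))

-- The prefix `(X_0, …, X_{i-1})` of a random sequence `X`.
def prefixSeq {Ω 𝒳 : Type*} (X : Ω → ℕ → 𝒳) (i : ℕ) : Ω → (Fin i → 𝒳) :=
  fun ω j => X ω (j : ℕ)

-- Directed information `I(X^n → Y^n) = ∑_{i=1}^n I(X^i ; Y_i | Y^{i-1})` (0-indexed).
def directedInfo {Ω 𝒳 𝒴 : Type*} [Fintype Ω] (p : Ω → ℝ)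
    (X : Ω → ℕ → 𝒳) (Y : Ω → ℕ → 𝒴) (n : ℕ) : ℝ :=
  ∑ i ∈ Finset.range n,
    condMutualInfo p (prefixSeq X (i + 1)) (fun ω => Y ω i) (prefixSeq Y i)

/-! At an outcome of positive probability write `A i = P(x^i, y^i)`, `C i = P(x^i)` and
`D i = P(x^{i+1}, y^i)`. The observational law is `A n / C n`, the causally conditioned one is
`∏ A (i+1) / D i`, and since `A 0 = C 0 = 1` their ratio telescopes to
`∏ D i * C i / (A i * C (i+1))`, a product of the pointwise densities of
`I(Y^i ; X_i | X^i)`. Taking logarithms and averaging over `p` gives the reverse directed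
information; outcomes of probability zero contribute nothing to either side. -/

section Probability

variable {Ω : Type*} [Fintype Ω] (p : Ω → ℝ)

theorem pr_pos (hp0 : ∀ ω, 0 ≤ p ω) {E : Ω → Prop} {ω : Ω} (hω : 0 < p ω) (hE : E ω) :
    0 < pr p E := by
  unfold pr
  refine sum_pos' (fun ω' _ => ?_) ⟨ω, mem_univ ω, by simpa [hE] using hω⟩
  split_ifs
  exacts [hp0 ω', le_rfl]

theorem pr_eq_one (hp1 : ∑ ω, p ω = 1) {E : Ω → Prop} (h : ∀ ω, E ω) : pr p E = 1 := by
  simp [pr, h, hp1]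

end Probability

theorem prefixSeq_succ_eq_iff {Ω 𝒳 : Type*} (X : Ω → ℕ → 𝒳) (i : ℕ) (ω' ω : Ω) :
    prefixSeq X (i + 1) ω' = prefixSeq X (i + 1) ω ↔
      X ω' i = X ω i ∧ prefixSeq X i ω' = prefixSeq X i ω := by
  refine ⟨fun h => ⟨congrFun h (Fin.last i), funext fun j => congrFun h j.castSucc⟩, ?_⟩
  rintro ⟨hlast, hinit⟩
  funext j
  induction j using Fin.lastCases with
  | last => exact hlast
  | cast j => exact congrFun hinit j

theorem div_div_prod_eq_prod_of_telescope {K : Type*} [Field K] (A C D : ℕ → K)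
    (hA : ∀ i, A i ≠ 0) (hC : ∀ i, C i ≠ 0) (hD : ∀ i, D i ≠ 0) (hA0 : A 0 = 1) (hC0 : C 0 = 1)
    (n : ℕ) :
    A n / C n / ∏ i ∈ range n, A (i + 1) / D i = ∏ i ∈ range n, D i * C i / (A i * C (i + 1)) := by
  induction n with
  | zero => simp [hA0, hC0]
  | succ n ih =>
    rw [prod_range_succ, prod_range_succ, ← ih]
    have := hA n; have := hA (n + 1); have := hC n; have := hC (n + 1); have := hD n
    field_simp

theorem log_div_div_prod_eq_sum_log (A C D : ℕ → ℝ)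
    (hA : ∀ i, 0 < A i) (hC : ∀ i, 0 < C i) (hD : ∀ i, 0 < D i) (hA0 : A 0 = 1) (hC0 : C 0 = 1)
    (n : ℕ) :
    Real.log (A n / C n / ∏ i ∈ range n, A (i + 1) / D i) =
      ∑ i ∈ range n, Real.log (D i * C i / (A i * C (i + 1))) := by
  rw [div_div_prod_eq_prod_of_telescope A C D (fun i => (hA i).ne') (fun i => (hC i).ne')
    (fun i => (hD i).ne') hA0 hC0, Real.log_prod]
  intro i _
  have := hA i; have := hC (i + 1); have := hD i; have := hC i
  positivity

theorem obs_interventional_gap_eq_reverse_directedInfo_general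
    {Ω 𝒳 𝒴 : Type*} [Fintype Ω]
    (p : Ω → ℝ) (hp0 : ∀ ω, 0 ≤ p ω) (hp1 : ∑ ω, p ω = 1)
    (X : Ω → ℕ → 𝒳) (Y : Ω → ℕ → 𝒴) (n : ℕ) :
    ∑ ω, p ω * Real.log
        ((pr p (fun ω' => prefixSeq X n ω' = prefixSeq X n ω ∧
              prefixSeq Y n ω' = prefixSeq Y n ω) /
            pr p (fun ω' => prefixSeq X n ω' = prefixSeq X n ω)) /
          ∏ i ∈ Finset.range n,
            pr p (fun ω' => prefixSeq X (i + 1) ω' = prefixSeq X (i + 1) ω ∧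
                  prefixSeq Y (i + 1) ω' = prefixSeq Y (i + 1) ω) /
              pr p (fun ω' => prefixSeq X (i + 1) ω' = prefixSeq X (i + 1) ω ∧
                    prefixSeq Y i ω' = prefixSeq Y i ω)) =
      ∑ i ∈ Finset.range n,
        condMutualInfo p (prefixSeq Y i) (fun ω => X ω i) (prefixSeq X i) := by
  unfold condMutualInfo
  rw [sum_comm (s := range n)]
  refine sum_congr rfl fun ω _ => ?_
  rw [← mul_sum]
  rcases (hp0 ω).eq_or_lt with hzero | hpos
  · simp [← hzero]
  congr 1
  simp only [← prefixSeq_succ_eq_iff, and_comm (a := prefixSeq Y _ _ = _)]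
  exact log_div_div_prod_eq_sum_log
    (fun i => pr p fun ω' => prefixSeq X i ω' = prefixSeq X i ω ∧
      prefixSeq Y i ω' = prefixSeq Y i ω)
    (fun i => pr p fun ω' => prefixSeq X i ω' = prefixSeq X i ω)
    (fun i => pr p fun ω' => prefixSeq X (i + 1) ω' = prefixSeq X (i + 1) ω ∧
      prefixSeq Y i ω' = prefixSeq Y i ω)
    (fun _ => pr_pos p hp0 hpos ⟨rfl, rfl⟩) (fun _ => pr_pos p hp0 hpos rfl)
    (fun _ => pr_pos p hp0 hpos ⟨rfl, rfl⟩)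
    (pr_eq_one p hp1 fun _ => ⟨Subsingleton.elim _ _, Subsingleton.elim _ _⟩)
    (pr_eq_one p hp1 fun _ => Subsingleton.elim _ _) n

/-- observational–interventional gap equals reverse directed
information: `E[log(P(Y^n|X^n)/P(Y^n‖X^n))] = I(Y^{n-1}→X^n)
= Σ_{i=1}^n I(Y^{i-1}; X_i | X^{i-1})`. -/
theorem obs_interventional_gap_eq_reverse_directedInfo
    {Ω 𝒳 𝒴 : Type*} [Fintype Ω] [Fintype 𝒳] [Fintype 𝒴]
    (p : Ω → ℝ) (hp0 : ∀ ω, 0 ≤ p ω) (hp1 : ∑ ω, p ω = 1)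
    (X : Ω → ℕ → 𝒳) (Y : Ω → ℕ → 𝒴) (n : ℕ) :
    ∑ ω, p ω * Real.log
        ((pr p (fun ω' => prefixSeq X n ω' = prefixSeq X n ω ∧
              prefixSeq Y n ω' = prefixSeq Y n ω) /
            pr p (fun ω' => prefixSeq X n ω' = prefixSeq X n ω)) /
          ∏ i ∈ Finset.range n,
            pr p (fun ω' => prefixSeq X (i + 1) ω' = prefixSeq X (i + 1) ω ∧
                  prefixSeq Y (i + 1) ω' = prefixSeq Y (i + 1) ω) /
              pr p (fun ω' => prefixSeq X (i + 1) ω' = prefixSeq X (i + 1) ω ∧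
                    prefixSeq Y i ω' = prefixSeq Y i ω)) =
      ∑ i ∈ Finset.range n,
        condMutualInfo p (prefixSeq Y i) (fun ω => X ω i) (prefixSeq X i) :=
  obs_interventional_gap_eq_reverse_directedInfo_general p hp0 hp1 X Y n
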